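/- arXiv:1810.01509 — 2 statements merged into one kernel-verified Lean document; each statement's English description precedes it below -/
import Mathlib

section
/- Let B be the K×K connection-probability matrix of a BTSBM with K = 2^d and parameters p_0, …, p_d, and let λ_{d,q} = p_0 + Σ_{r=1}^{d−q} 2^{r−1} p_r − 2^{d−q} p_{d−q+1} for q ∈ [d]. For q ∈ {1,…,d} and each binary string x ∈ {0,1}^{q−1}, define ν_x^{(d,q)} ∈ R^K by (ν_x^{(d,q)})_k = 1 if the binary string I^{−1}(k) has prefix x0, −1 if it has prefix x1, and 0 otherwise. Then for every such x, the vectors {ν_x^{(d,q)} : x ∈ {0,1}^{q−1}} are mutually orthogonal and B ν_x^{(d,q)} = λ_{d,q} ν_x^{(d,q)}. -/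
open Finset Matrix

namespace BTSBM

/-- 0-based index of the first coordinate where two binary strings differ. -/
noncomputable def firstDiff {d : ℕ} (x y : Fin d → Bool) : ℕ :=
  sInf {q : ℕ | ∃ h : q < d, x ⟨q, h⟩ ≠ y ⟨q, h⟩}

/-- The BTSBM community connection matrix `B`: off-diagonal entries are
`p (D x y)` where `D x y = d + 1 - s x y` and `s` is the 1-based first index of
disagreement, so that `D x y = d - firstDiff x y`; diagonal entries are `p 0`. -/
noncomputable def Bmat (d : ℕ) (p : ℕ → ℝ) :
    Matrix (Fin d → Bool) (Fin d → Bool) ℝ :=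
  Matrix.of fun x y => if x = y then p 0 else p (d - firstDiff x y)

/-- The membership matrix `Z`. -/
def Zmat (n d : ℕ) (c : Fin n → Fin d → Bool) : Matrix (Fin n) (Fin d → Bool) ℝ :=
  Matrix.of fun i x => if c i = x then 1 else 0

/-- `P̃ = Z B Zᵀ`. -/
noncomputable def Ptil (n d : ℕ) (p : ℕ → ℝ) (c : Fin n → Fin d → Bool) :
    Matrix (Fin n) (Fin n) ℝ :=
  Zmat n d c * Bmat d p * (Zmat n d c)ᵀ

/-- Every community has exactly `m` nodes. -/
def Balanced (n d m : ℕ) (c : Fin n → Fin d → Bool) : Prop :=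
  ∀ x : Fin d → Bool, (Finset.univ.filter fun i => c i = x).card = m

/-- The eigenvalue formulas `λ_{d,q}` of `B`. -/
noncomputable def lamB (d : ℕ) (p : ℕ → ℝ) (q : ℕ) : ℝ :=
  if q = 0 then p 0 + ∑ r ∈ Finset.Icc 1 d, 2 ^ (r - 1) * p r
  else p 0 + (∑ r ∈ Finset.Icc 1 (d - q), 2 ^ (r - 1) * p r) - 2 ^ (d - q) * p (d - q + 1)

/-- The vector `ν_x^{(d,q)}` for a binary string `x` of length `q − 1`, as a vector
indexed by the `K = 2^d` communities: `+1` on communities whose string has prefix `x0`,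
`−1` on communities whose string has prefix `x1`, `0` otherwise. -/
noncomputable def nuBvec (d q : ℕ) (hq1 : 1 ≤ q) (hqd : q ≤ d)
    (x : Fin (q - 1) → Bool) : (Fin d → Bool) → ℝ := fun y =>
  if ∀ r : Fin (q - 1), y (Fin.castLE (by omega) r) = x r then
    (if y ⟨q - 1, by omega⟩ = false then 1 else -1)
  else 0

/-! ### Auxiliary lemmas about `firstDiff` -/

lemma firstDiff_mem {d : ℕ} {x y : Fin d → Bool} (h : x ≠ y) :
    firstDiff x y ∈ {q : ℕ | ∃ h : q < d, x ⟨q, h⟩ ≠ y ⟨q, h⟩} := by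
  apply Nat.sInf_mem
  rw [Function.ne_iff] at h
  obtain ⟨i, hi⟩ := h
  exact ⟨i.1, ⟨i.isLt, by simpa using hi⟩⟩

lemma firstDiff_lt {d : ℕ} {x y : Fin d → Bool} (h : x ≠ y) : firstDiff x y < d := by
  obtain ⟨hlt, -⟩ := firstDiff_mem h; exact hlt

lemma firstDiff_ne {d : ℕ} {x y : Fin d → Bool} (h : x ≠ y) (hlt : firstDiff x y < d) :
    x ⟨firstDiff x y, hlt⟩ ≠ y ⟨firstDiff x y, hlt⟩ := by
  obtain ⟨h1, h2⟩ := firstDiff_mem h; exact h2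

lemma firstDiff_min {d : ℕ} {x y : Fin d → Bool} {i : ℕ} (h : i < firstDiff x y) (hi : i < d) :
    x ⟨i, hi⟩ = y ⟨i, hi⟩ := by
  have h2 := Nat.notMem_of_lt_sInf (s := {q : ℕ | ∃ h : q < d, x ⟨q, h⟩ ≠ y ⟨q, h⟩}) h
  rw [Set.mem_setOf_eq] at h2
  push_neg at h2
  exact h2 hi

lemma firstDiff_eq {d : ℕ} {x y : Fin d → Bool} {j : ℕ} (hj : j < d)
    (h1 : x ⟨j, hj⟩ ≠ y ⟨j, hj⟩)
    (h2 : ∀ i (hi : i < j), x ⟨i, hi.trans hj⟩ = y ⟨i, hi.trans hj⟩) :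
    firstDiff x y = j := by
  apply le_antisymm
  · exact Nat.sInf_le ⟨hj, h1⟩
  · apply le_csInf ⟨j, Set.mem_setOf_eq ▸ ⟨hj, h1⟩⟩
    intro k hk
    by_contra hlt
    push_neg at hlt
    obtain ⟨hkd, hne⟩ := hk
    exact hne (h2 k hlt)

/-! ### Merging a prefix, a middle bit, and a tail -/

/-- merge a prefix of length `q'`, a middle bit, and a tail of length `m` into
a string of length `d = q' + 1 + m`. -/
def mergeF (q' m d : ℕ) (hd : d = q' + 1 + m) (w : Fin q' → Bool) (b : Bool)
    (t : Fin m → Bool) : Fin d → Bool := fun i =>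
  if h : (i : ℕ) < q' then w ⟨i, h⟩
  else if h2 : (i : ℕ) = q' then b
  else t ⟨(i : ℕ) - (q' + 1), by have := i.isLt; omega⟩

lemma mergeF_low {q' m d : ℕ} (hd : d = q' + 1 + m) {w b t} {i : Fin d} (h : (i : ℕ) < q') :
    mergeF q' m d hd w b t i = w ⟨i, h⟩ := dif_pos h

lemma mergeF_mid {q' m d : ℕ} (hd : d = q' + 1 + m) {w b t} {i : Fin d} (h : (i : ℕ) = q') :
    mergeF q' m d hd w b t i = b := by
  rw [mergeF, dif_neg (by omega), dif_pos h]

lemma mergeF_high {q' m d : ℕ} (hd : d = q' + 1 + m) {w b t} {i : Fin d} (h : q' < (i : ℕ)) :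
    mergeF q' m d hd w b t i = t ⟨(i : ℕ) - (q' + 1), by have := i.isLt; omega⟩ := by
  rw [mergeF, dif_neg (by omega), dif_neg (by omega)]

/-- every string decomposes -/
lemma mergeF_surj {q' m d : ℕ} (hd : d = q' + 1 + m) (y : Fin d → Bool) :
    y = mergeF q' m d hd (fun j => y ⟨j, by omega⟩) (y ⟨q', by omega⟩)
      (fun j => y ⟨q' + 1 + j, by have := j.isLt; omega⟩) := by
  funext i
  rcases lt_trichotomy (i : ℕ) q' with h | h | h
  · rw [mergeF_low hd h]
  · rw [mergeF_mid hd h]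
    congr 1
    exact Fin.ext (by simp only [Fin.val_mk]; omega)
  · rw [mergeF_high hd h]
    congr 1
    exact Fin.ext (by simp only [Fin.val_mk]; omega)

lemma mergeF_inj_w {q' m d : ℕ} (hd : d = q' + 1 + m) {w w' b b' t t'}
    (h : mergeF q' m d hd w b t = mergeF q' m d hd w' b' t') : w = w' := by
  funext j
  have := congrFun h ⟨j, by omega⟩
  rwa [mergeF_low hd (by exact j.isLt), mergeF_low hd (by exact j.isLt)] at this

lemma mergeF_inj_b {q' m d : ℕ} (hd : d = q' + 1 + m) {w w' b b' t t'}
    (h : mergeF q' m d hd w b t = mergeF q' m d hd w' b' t') : b = b' := by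
  have := congrFun h ⟨q', by omega⟩
  rwa [mergeF_mid hd rfl, mergeF_mid hd rfl] at this

lemma mergeF_inj_t {q' m d : ℕ} (hd : d = q' + 1 + m) {w w' b b' t t'}
    (h : mergeF q' m d hd w b t = mergeF q' m d hd w' b' t') : t = t' := by
  funext j
  have h2 := congrFun h ⟨q' + 1 + j, by have := j.isLt; omega⟩
  rw [mergeF_high hd (by simp only [Fin.val_mk]; omega),
    mergeF_high hd (by simp only [Fin.val_mk]; omega)] at h2
  have hidx : (⟨q' + 1 + (j : ℕ) - (q' + 1), by have := j.isLt; omega⟩ : Fin m) = j :=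
    Fin.ext (by simp)
  rwa [hidx] at h2

lemma firstDiff_mergeF_w {q' m d : ℕ} (hd : d = q' + 1 + m) {w w' : Fin q' → Bool} {b b' t t'}
    (hww' : w ≠ w') :
    firstDiff (mergeF q' m d hd w b t) (mergeF q' m d hd w' b' t') = firstDiff w w' := by
  have hlt := firstDiff_lt hww'
  apply firstDiff_eq (show firstDiff w w' < d by omega)
  · rw [mergeF_low hd hlt, mergeF_low hd hlt]
    exact firstDiff_ne hww' hlt
  · intro i hi
    rw [mergeF_low hd (by simp only [Fin.val_mk]; omega),
      mergeF_low hd (by simp only [Fin.val_mk]; omega)]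
    exact firstDiff_min hi (by omega)

lemma firstDiff_mergeF_b {q' m d : ℕ} (hd : d = q' + 1 + m) {w : Fin q' → Bool} {b b' t t'}
    (hb : b ≠ b') :
    firstDiff (mergeF q' m d hd w b t) (mergeF q' m d hd w b' t') = q' := by
  apply firstDiff_eq (show q' < d by omega)
  · rw [mergeF_mid hd rfl, mergeF_mid hd rfl]
    exact hb
  · intro i hi
    rw [mergeF_low hd hi, mergeF_low hd hi]

lemma firstDiff_mergeF_t {q' m d : ℕ} (hd : d = q' + 1 + m) {w : Fin q' → Bool} {b}
    {t t' : Fin m → Bool} (ht : t ≠ t') :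
    firstDiff (mergeF q' m d hd w b t) (mergeF q' m d hd w b t') = q' + 1 + firstDiff t t' := by
  have hlt := firstDiff_lt ht
  apply firstDiff_eq (show q' + 1 + firstDiff t t' < d by omega)
  · rw [mergeF_high hd (by simp only [Fin.val_mk]; omega),
      mergeF_high hd (by simp only [Fin.val_mk]; omega)]
    have hidx : (⟨q' + 1 + firstDiff t t' - (q' + 1), by omega⟩ : Fin m)
        = ⟨firstDiff t t', hlt⟩ := Fin.ext (by simp)
    rw [hidx]
    exact firstDiff_ne ht hlt
  · intro i hi
    rcases lt_trichotomy i q' with h | h | h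
    · rw [mergeF_low hd h, mergeF_low hd h]
    · rw [mergeF_mid hd h, mergeF_mid hd h]
    · rw [mergeF_high hd h, mergeF_high hd h]
      exact firstDiff_min (by simp only [Fin.val_mk]; omega) (by simp only [Fin.val_mk]; omega)

/-- the merge map as an equivalence -/
def mergeEquiv (q' m d : ℕ) (hd : d = q' + 1 + m) :
    ((Fin q' → Bool) × Bool × (Fin m → Bool)) ≃ (Fin d → Bool) where
  toFun wbt := mergeF q' m d hd wbt.1 wbt.2.1 wbt.2.2
  invFun y := (fun j => y ⟨j, by omega⟩, y ⟨q', by omega⟩,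
    fun j => y ⟨q' + 1 + j, by have := j.isLt; omega⟩)
  left_inv := by
    rintro ⟨w, b, t⟩
    refine Prod.ext ?_ (Prod.ext ?_ ?_)
    · funext j
      show mergeF q' m d hd w b t ⟨j, by omega⟩ = w j
      rw [mergeF_low hd (by exact j.isLt)]
    · exact mergeF_mid hd rfl
    · funext j
      show mergeF q' m d hd w b t ⟨q' + 1 + j, _⟩ = t j
      rw [mergeF_high hd (by simp only [Fin.val_mk]; omega)]
      congr 1
      exact Fin.ext (by simp)
  right_inv y := (mergeF_surj hd y).symm

/-! ### cons lemmas and row sums -/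

lemma firstDiff_cons_ne {e : ℕ} {a b : Bool} (h : a ≠ b) (u v : Fin e → Bool) :
    firstDiff (Fin.cons a u) (Fin.cons b v) = 0 :=
  firstDiff_eq (Nat.succ_pos e) (by simpa using h) (fun i hi => absurd hi (Nat.not_lt_zero i))

lemma firstDiff_cons_eq {e : ℕ} {u v : Fin e → Bool} (h : u ≠ v) (a : Bool) :
    firstDiff (Fin.cons a u) (Fin.cons a v) = firstDiff u v + 1 := by
  have hlt := firstDiff_lt h
  apply firstDiff_eq (show firstDiff u v + 1 < e + 1 by omega)
  · have hs : (⟨firstDiff u v + 1, by omega⟩ : Fin (e+1))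
        = (⟨firstDiff u v, hlt⟩ : Fin e).succ := rfl
    rw [hs, Fin.cons_succ, Fin.cons_succ]
    exact firstDiff_ne h hlt
  · intro i hi
    match i, hi with
    | 0, _ => simp
    | (i+1), hi =>
      have hs : (⟨i + 1, by omega⟩ : Fin (e+1)) = (⟨i, by omega⟩ : Fin e).succ := rfl
      rw [hs, Fin.cons_succ, Fin.cons_succ]
      exact firstDiff_min (by omega) (by omega)

lemma rowSum (p : ℕ → ℝ) : ∀ (e : ℕ) (u : Fin e → Bool),
    ∑ v : Fin e → Bool, Bmat e p u v = p 0 + ∑ r ∈ Icc 1 e, 2 ^ (r - 1) * p r := by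
  intro e
  induction e with
  | zero =>
      intro u
      rw [Fintype.sum_eq_single u]
      · simp [Bmat]
      · intro v hv
        exact absurd (Subsingleton.elim v u) hv
  | succ e ih =>
      intro u
      have key : ∀ (a b : Bool) (ut : Fin e → Bool),
          ∑ t : Fin e → Bool, Bmat (e+1) p (Fin.cons a ut) (Fin.cons b t)
            = if b = a then ∑ v : Fin e → Bool, Bmat e p ut v else 2 ^ e * p (e + 1) := by
        intro a b ut
        split_ifs with hba
        · subst hba
          apply Finset.sum_congr rfl
          intro t _
          by_cases ht : ut = t
          · subst ht; simp [Bmat]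
          · have hne : (Fin.cons b ut : Fin (e+1) → Bool) ≠ Fin.cons b t := by
              intro hc
              refine ht (funext fun j => ?_)
              have h3 := congrFun hc j.succ
              rwa [Fin.cons_succ, Fin.cons_succ] at h3
            simp only [Bmat, Matrix.of_apply]
            rw [if_neg hne, if_neg ht, firstDiff_cons_eq ht]
            congr 1
            omega
        · have hconst : ∀ t : Fin e → Bool,
              Bmat (e+1) p (Fin.cons a ut) ((Fin.cons b t : Fin (e+1) → Bool)) = p (e + 1) := by
            intro t
            have hne : (Fin.cons a ut : Fin (e+1) → Bool) ≠ Fin.cons b t := by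
              intro hc
              exact hba (by simpa using (congrFun hc 0).symm)
            simp only [Bmat, Matrix.of_apply]
            rw [if_neg hne, firstDiff_cons_ne (fun hc => hba hc.symm)]
            norm_num
          rw [Finset.sum_congr rfl (fun t _ => hconst t), Finset.sum_const, Finset.card_univ,
            Fintype.card_fun, Fintype.card_bool, Fintype.card_fin]
          norm_num
      calc ∑ v : Fin (e+1) → Bool, Bmat (e+1) p u v
          = ∑ bt : Bool × (Fin e → Bool), Bmat (e+1) p u (Fin.consEquiv (fun _ => Bool) bt) :=
            (Equiv.sum_comp (Fin.consEquiv (fun _ => Bool)) _).symm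
        _ = ∑ b : Bool, ∑ t : Fin e → Bool,
              Bmat (e+1) p (Fin.cons (u 0) (Fin.tail u)) (Fin.cons b t) := by
            rw [Fintype.sum_prod_type, Fin.cons_self_tail]
            rfl
        _ = p 0 + ∑ r ∈ Icc 1 (e+1), 2 ^ (r - 1) * p r := by
            rw [Fintype.sum_bool, key, key, ih]
            have hsplit : ∑ r ∈ Icc 1 (e+1), 2 ^ (r-1) * p r
                = (∑ r ∈ Icc 1 e, 2 ^ (r-1) * p r) + 2 ^ e * p (e+1) := by
              rw [Finset.sum_Icc_succ_top (by omega : 1 ≤ e + 1)]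
              norm_num
            rcases Bool.eq_false_or_eq_true (u 0) with h0 | h0 <;> rw [h0, hsplit] <;>
              norm_num <;> ring

/-! ### the key partial sums -/

lemma Ssum {q' m d : ℕ} (hd : d = q' + 1 + m) (p : ℕ → ℝ)
    (wY : Fin q' → Bool) (bY : Bool) (tY : Fin m → Bool) (x : Fin q' → Bool) (b : Bool) :
    ∑ t : Fin m → Bool, Bmat d p (mergeF q' m d hd wY bY tY) (mergeF q' m d hd x b t)
      = if wY = x then
          (if b = bY then p 0 + ∑ r ∈ Icc 1 m, 2 ^ (r - 1) * p r else 2 ^ m * p (m + 1))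
        else 2 ^ m * p (d - firstDiff wY x) := by
  split_ifs with hw hb
  · subst hw; subst hb
    rw [← rowSum p m tY]
    apply Finset.sum_congr rfl
    intro t _
    simp only [Bmat, Matrix.of_apply]
    by_cases ht : tY = t
    · subst ht; simp
    · have hne : mergeF q' m d hd wY b tY ≠ mergeF q' m d hd wY b t :=
        fun hc => ht (mergeF_inj_t hd hc)
      rw [if_neg hne, if_neg ht, firstDiff_mergeF_t hd ht]
      congr 1
      have := firstDiff_lt ht
      omega
  · subst hw
    have hconst : ∀ t : Fin m → Bool,
        Bmat d p (mergeF q' m d hd wY bY tY) (mergeF q' m d hd wY b t) = p (m + 1) := by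
      intro t
      have hne : mergeF q' m d hd wY bY tY ≠ mergeF q' m d hd wY b t :=
        fun hc => hb ((mergeF_inj_b hd hc).symm)
      simp only [Bmat, Matrix.of_apply]
      rw [if_neg hne, firstDiff_mergeF_b hd (fun hc => hb hc.symm)]
      congr 1
      omega
    rw [Finset.sum_congr rfl (fun t _ => hconst t), Finset.sum_const, Finset.card_univ,
      Fintype.card_fun, Fintype.card_bool, Fintype.card_fin]
    norm_num
  · have hconst : ∀ t : Fin m → Bool,
        Bmat d p (mergeF q' m d hd wY bY tY) (mergeF q' m d hd x b t)
          = p (d - firstDiff wY x) := by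
      intro t
      have hne : mergeF q' m d hd wY bY tY ≠ mergeF q' m d hd x b t :=
        fun hc => hw (mergeF_inj_w hd hc)
      simp only [Bmat, Matrix.of_apply]
      rw [if_neg hne, firstDiff_mergeF_w hd hw]
    rw [Finset.sum_congr rfl (fun t _ => hconst t), Finset.sum_const, Finset.card_univ,
      Fintype.card_fun, Fintype.card_bool, Fintype.card_fin]
    norm_num

theorem statement4 (d : ℕ) (hd : 1 ≤ d)
    (p : ℕ → ℝ) (hp : ∀ r ≤ d, p r ∈ Set.Icc (0:ℝ) 1)
    (q : ℕ) (hq1 : 1 ≤ q) (hqd : q ≤ d) :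
    -- the vectors ν_x^{(d,q)}, x ∈ {0,1}^{q−1}, are mutually orthogonal
    (∀ x x' : Fin (q - 1) → Bool, x ≠ x' →
        ∑ y : Fin d → Bool, nuBvec d q hq1 hqd x y * nuBvec d q hq1 hqd x' y = 0)
    -- and each of them is an eigenvector of B with eigenvalue λ_{d,q}
    ∧ ∀ x : Fin (q - 1) → Bool,
        (Bmat d p).mulVec (nuBvec d q hq1 hqd x) = lamB d p q • nuBvec d q hq1 hqd x := by
  have hd2 : d = (q - 1) + 1 + (d - q) := by omega
  -- values of nu on merged strings
  have hnu : ∀ (x : Fin (q-1) → Bool) w b t,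
      nuBvec d q hq1 hqd x (mergeF (q-1) (d-q) d hd2 w b t)
        = if w = x then (if b = false then (1:ℝ) else -1) else 0 := by
    intro x w b t
    have hc : (∀ r : Fin (q - 1),
        mergeF (q-1) (d-q) d hd2 w b t (Fin.castLE (by omega) r) = x r) ↔ w = x := by
      constructor
      · intro h
        funext r
        have h2 := h r
        rwa [mergeF_low hd2 (show ((Fin.castLE (by omega) r : Fin d) : ℕ) < q - 1
          from r.isLt)] at h2
      · rintro rfl r
        rw [mergeF_low hd2 (show ((Fin.castLE (by omega) r : Fin d) : ℕ) < q - 1 from r.isLt)]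
        rfl
    by_cases hwx : w = x
    · rw [nuBvec, if_pos (hc.mpr hwx), if_pos hwx, mergeF_mid hd2 rfl]
    · rw [nuBvec, if_neg (fun h => hwx (hc.mp h)), if_neg hwx]
  constructor
  · intro x x' hxx'
    apply Finset.sum_eq_zero
    intro y _
    rw [mergeF_surj hd2 y, hnu, hnu]
    by_cases h1 : (fun j : Fin (q-1) => y ⟨j, by have := j.isLt; omega⟩) = x
    · rw [if_pos h1, if_neg (fun h2 => hxx' (h1.symm.trans h2)), mul_zero]
    · rw [if_neg h1, zero_mul]
  · intro x
    funext y
    have hyd := mergeF_surj hd2 y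
    set wY : Fin (q-1) → Bool := fun j => y ⟨j, by omega⟩ with hwY
    set bY : Bool := y ⟨q - 1, by omega⟩ with hbY
    set tY : Fin (d-q) → Bool := fun j => y ⟨(q-1) + 1 + j, by have := j.isLt; omega⟩ with htY
    have hmv : (Bmat d p).mulVec (nuBvec d q hq1 hqd x) y
        = ∑ z : Fin d → Bool, Bmat d p y z * nuBvec d q hq1 hqd x z := by
      simp [Matrix.mulVec, dotProduct]
    rw [hmv]
    have hre : ∑ z : Fin d → Bool, Bmat d p y z * nuBvec d q hq1 hqd x z
        = ∑ w : Fin (q-1) → Bool, ∑ b : Bool, ∑ t : Fin (d-q) → Bool,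
            Bmat d p y (mergeF (q-1) (d-q) d hd2 w b t)
              * nuBvec d q hq1 hqd x (mergeF (q-1) (d-q) d hd2 w b t) := by
      rw [← Equiv.sum_comp (mergeEquiv (q-1) (d-q) d hd2)
        (fun z => Bmat d p y z * nuBvec d q hq1 hqd x z), Fintype.sum_prod_type]
      apply Finset.sum_congr rfl
      intro w _
      rw [Fintype.sum_prod_type]
      rfl
    rw [hre]
    have hcollapse : ∀ w : Fin (q-1) → Bool,
        (∑ b : Bool, ∑ t : Fin (d-q) → Bool,
            Bmat d p y (mergeF (q-1) (d-q) d hd2 w b t)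
              * nuBvec d q hq1 hqd x (mergeF (q-1) (d-q) d hd2 w b t))
        = if w = x then
            (∑ t, Bmat d p y (mergeF (q-1) (d-q) d hd2 x false t))
              - (∑ t, Bmat d p y (mergeF (q-1) (d-q) d hd2 x true t)) else 0 := by
      intro w
      by_cases hwx : w = x
      · subst hwx
        rw [if_pos rfl, Fintype.sum_bool]
        simp only [hnu, if_pos rfl]
        norm_num [← Finset.sum_mul, Finset.sum_neg_distrib]
        ring
      · rw [if_neg hwx]
        apply Finset.sum_eq_zero
        intro b _
        apply Finset.sum_eq_zero
        intro t _
        rw [hnu, if_neg hwx, mul_zero]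
    rw [Finset.sum_congr rfl (fun w _ => hcollapse w), Finset.sum_ite_eq' Finset.univ x]
    rw [if_pos (Finset.mem_univ x)]
    -- now use Ssum with the decomposition of y
    rw [hyd]
    rw [Ssum hd2 p wY bY tY x false, Ssum hd2 p wY bY tY x true]
    have hsmul : (lamB d p q • nuBvec d q hq1 hqd x) (mergeF (q-1) (d-q) d hd2 wY bY tY)
        = lamB d p q * nuBvec d q hq1 hqd x (mergeF (q-1) (d-q) d hd2 wY bY tY) := rfl
    rw [hsmul, hnu]
    have hlam : lamB d p q = p 0 + (∑ r ∈ Finset.Icc 1 (d - q), 2 ^ (r - 1) * p r)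
        - 2 ^ (d - q) * p (d - q + 1) := by
      rw [lamB, if_neg (by omega)]
    by_cases hwx : wY = x
    · rw [if_pos hwx, if_pos hwx, if_pos hwx]
      cases bY with
      | false => rw [hlam]; norm_num
      | true => rw [hlam]; norm_num
    · rw [if_neg hwx, if_neg hwx, if_neg hwx, mul_zero, sub_self]

end BTSBM
end

section
/- Let P̃ = Z B Z^T be the matrix of a balanced assortative BTSBM (p_0 > p_1 > … > p_d ≥ 0) with K = 2^d communities of size m = n/K. Then every eigenvalue of P̃ is nonnegative (P̃ is positive semidefinite), and consequently the sum of the absolute values of all eigenvalues of P̃ equals trace(P̃) = n p_0; equivalently, letting λ_1, …, λ_K denote the K nonzero eigenvalues of P̃ counted with multiplicity, (1/m) Σ_{s=1}^{K} |λ_s| = 2^d p_0. -/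
open Finset Matrix

namespace BTSBM

/-! ### Auxiliary lemmas -/

open Polynomial

lemma firstDiff_comm {d : ℕ} (x y : Fin d → Bool) : firstDiff x y = firstDiff y x := by
  unfold firstDiff
  congr 1
  ext q
  exact ⟨fun ⟨h, hne⟩ => ⟨h, hne.symm⟩, fun ⟨h, hne⟩ => ⟨h, hne.symm⟩⟩

lemma Bmat_symm (d : ℕ) (p : ℕ → ℝ) : (Bmat d p).IsHermitian := by
  ext x y
  simp only [Bmat, conjTranspose_apply, of_apply, star_trivial, eq_comm (a := y) (b := x),
    firstDiff_comm y x]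

lemma firstDiff_cons_ne_s13 {d : ℕ} (b b' : Bool) (hb : b ≠ b') (x y : Fin d → Bool) :
    firstDiff (Fin.cons b x) (Fin.cons b' y) = 0 := by
  unfold firstDiff
  rw [Nat.sInf_eq_zero]
  left
  exact ⟨Nat.succ_pos d, by simpa using hb⟩

lemma firstDiff_cons_eq_s13 {d : ℕ} (b : Bool) (x y : Fin d → Bool) (hxy : x ≠ y) :
    firstDiff (Fin.cons b x) (Fin.cons b y) = firstDiff x y + 1 := by
  have hne : {q : ℕ | ∃ h : q < d, x ⟨q, h⟩ ≠ y ⟨q, h⟩}.Nonempty := by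
    by_contra h
    apply hxy
    funext i
    by_contra hi
    exact h ⟨i.1, i.2, by simpa using hi⟩
  set q0 := firstDiff x y with hq0
  have hmem : q0 ∈ {q : ℕ | ∃ h : q < d, x ⟨q, h⟩ ≠ y ⟨q, h⟩} := Nat.sInf_mem hne
  obtain ⟨hq0d, hq0ne⟩ := hmem
  unfold firstDiff
  apply le_antisymm
  · apply Nat.sInf_le
    refine ⟨Nat.succ_lt_succ hq0d, ?_⟩
    have : (⟨q0 + 1, Nat.succ_lt_succ hq0d⟩ : Fin (d+1)) = Fin.succ ⟨q0, hq0d⟩ := rfl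
    rw [this, Fin.cons_succ, Fin.cons_succ]
    exact hq0ne
  · apply le_csInf
    · exact ⟨q0 + 1, Nat.succ_lt_succ hq0d, by
        have : (⟨q0 + 1, Nat.succ_lt_succ hq0d⟩ : Fin (d+1)) = Fin.succ ⟨q0, hq0d⟩ := rfl
        rw [this, Fin.cons_succ, Fin.cons_succ]; exact hq0ne⟩
    · rintro q ⟨hq, hqne⟩
      match q, hq with
      | 0, hq => simp at hqne
      | r + 1, hq =>
        have hrd : r < d := Nat.lt_of_succ_lt_succ hq
        have : (⟨r + 1, hq⟩ : Fin (d+1)) = Fin.succ ⟨r, hrd⟩ := rfl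
        rw [this, Fin.cons_succ, Fin.cons_succ] at hqne
        have : q0 ≤ r := Nat.sInf_le ⟨hrd, hqne⟩
        omega

lemma Bmat_cons {d : ℕ} (p : ℕ → ℝ) (b b' : Bool) (x y : Fin d → Bool) :
    Bmat (d + 1) p (Fin.cons b x) (Fin.cons b' y)
      = if b = b' then Bmat d p x y else p (d + 1) := by
  by_cases hb : b = b'
  · subst hb
    simp only [if_pos rfl, Bmat, of_apply]
    by_cases hxy : x = y
    · subst hxy; simp
    · have hc : (Fin.cons b x : Fin (d+1) → Bool) ≠ Fin.cons b y := by
        intro h; exact hxy (by funext i; simpa using congrFun h i.succ)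
      rw [if_neg hc, if_neg hxy, firstDiff_cons_eq_s13 b x y hxy]
      congr 1
      omega
  · have hc : (Fin.cons b x : Fin (d+1) → Bool) ≠ Fin.cons b' y := by
      intro h
      exact hb (by simpa using congrFun h 0)
    simp only [if_neg hb, Bmat, of_apply, if_neg hc,
      firstDiff_cons_ne_s13 b b' hb x y, Nat.sub_zero]

lemma Bmat_shift {d : ℕ} (p : ℕ → ℝ) (t : ℝ) (x y : Fin d → Bool) :
    Bmat d p x y = Bmat d (fun r => p r - t) x y + t := by
  simp only [Bmat, of_apply]
  split <;> ring

lemma sum_split {d : ℕ} (f : (Fin (d + 1) → Bool) → ℝ) :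
    ∑ z, f z = (∑ x, f (Fin.cons false x)) + ∑ x, f (Fin.cons true x) := by
  rw [← Equiv.sum_comp (Fin.consEquiv fun _ => Bool) f, Fintype.sum_prod_type, Fintype.sum_bool]
  rw [add_comm]
  rfl

lemma quad_nonneg : ∀ (d : ℕ) (p : ℕ → ℝ), (∀ r < d, p (r + 1) ≤ p r) → 0 ≤ p d →
    ∀ v : (Fin d → Bool) → ℝ, 0 ≤ ∑ x, v x * ∑ y, Bmat d p x y * v y := by
  intro d
  induction d with
  | zero =>
    intro p _ hnn v
    refine Finset.sum_nonneg fun x _ => ?_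
    rw [Fintype.sum_subsingleton _ x]
    have hB : Bmat 0 p x x = p 0 := by simp [Bmat]
    rw [hB]
    have h : v x * (p 0 * v x) = p 0 * (v x * v x) := by ring
    rw [h]
    exact mul_nonneg hnn (mul_self_nonneg _)
  | succ d ih =>
    intro p hmono hnn v
    set t := p (d + 1) with ht
    have htpd : t ≤ p d := hmono d (by omega)
    set p' : ℕ → ℝ := fun r => p r - t with hp'
    set v0 : (Fin d → Bool) → ℝ := fun x => v (Fin.cons false x) with hv0
    set v1 : (Fin d → Bool) → ℝ := fun x => v (Fin.cons true x) with hv1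
    set S0 := ∑ x, v0 x with hS0
    set S1 := ∑ x, v1 x with hS1
    have hBs : ∀ x y, Bmat d p x y = Bmat d p' x y + t := by
      intro x y; rw [hp']; exact Bmat_shift p t x y
    have hinner : ∀ (b : Bool) (x : Fin d → Bool),
        (∑ w, Bmat (d + 1) p (Fin.cons b x) w * v w)
          = (∑ y, Bmat d p' x y * v (Fin.cons b y)) + t * (S0 + S1) := by
      intro b x
      rw [sum_split (fun w => Bmat (d + 1) p (Fin.cons b x) w * v w)]
      cases b <;>
      · simp only [Bmat_cons, if_pos rfl, if_neg (by simp : ¬ (false = true)),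
          if_neg (by simp : ¬ (true = false)), if_true, hBs,
          add_mul, Finset.sum_add_distrib, ← Finset.mul_sum, ← hv0, ← hv1, ← hS0, ← hS1]
        ring
    have key : (∑ z, v z * ∑ w, Bmat (d + 1) p z w * v w)
        = (∑ x, v0 x * ∑ y, Bmat d p' x y * v0 y)
          + (∑ x, v1 x * ∑ y, Bmat d p' x y * v1 y) + t * (S0 + S1) ^ 2 := by
      rw [sum_split (fun z => v z * ∑ w, Bmat (d + 1) p z w * v w)]
      simp only [hinner, mul_add, Finset.sum_add_distrib, ← Finset.sum_mul, ← hv0, ← hv1,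
        ← hS0, ← hS1]
      ring
    have hQ0 := ih p' (fun r hr => by simp only [hp']; have := hmono r (by omega); linarith)
      (by simp only [hp']; linarith) v0
    have hQ1 := ih p' (fun r hr => by simp only [hp']; have := hmono r (by omega); linarith)
      (by simp only [hp']; linarith) v1
    rw [key]
    have : 0 ≤ t * (S0 + S1) ^ 2 := mul_nonneg hnn (sq_nonneg _)
    linarith

lemma charpoly_conj {N : Type*} {R : Type*} [CommRing R] [Fintype N] [DecidableEq N]
    (U V D : Matrix N N R) (hUV : U * V = 1) :
    (U * D * V).charpoly = D.charpoly := by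
  have h1 : charmatrix (U * D * V)
      = (C : R →+* R[X]).mapMatrix U * charmatrix D * (C : R →+* R[X]).mapMatrix V := by
    unfold charmatrix
    rw [mul_sub, sub_mul]
    congr 1
    · symm
      rw [mul_assoc, (Matrix.scalar_commute (X : R[X]) (fun r' => Commute.all _ _)
        ((C : R →+* R[X]).mapMatrix V)).eq, ← mul_assoc, ← _root_.map_mul, hUV,
        _root_.map_one, one_mul]
    · rw [← _root_.map_mul, ← _root_.map_mul]
  have h2 : ((C : R →+* R[X]).mapMatrix U).det * ((C : R →+* R[X]).mapMatrix V).det = 1 := by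
    rw [← det_mul, ← _root_.map_mul, hUV, _root_.map_one, det_one]
  rw [Matrix.charpoly, Matrix.charpoly, h1, det_mul, det_mul]
  calc ((C : R →+* R[X]).mapMatrix U).det * (charmatrix D).det * ((C : R →+* R[X]).mapMatrix V).det
      = (charmatrix D).det * (((C : R →+* R[X]).mapMatrix U).det
          * ((C : R →+* R[X]).mapMatrix V).det) := by ring
    _ = (charmatrix D).det := by rw [h2, mul_one]

lemma charpoly_diagonal {N : Type*} {R : Type*} [CommRing R] [Fintype N] [DecidableEq N]
    (w : N → R) : (Matrix.diagonal w).charpoly = ∏ i, (X - C (w i)) := by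
  have h : charmatrix (Matrix.diagonal w) = Matrix.diagonal fun i => X - C (w i) := by
    ext i j
    by_cases hij : i = j
    · subst hij
      rw [charmatrix_apply_eq, Matrix.diagonal_apply_eq, Matrix.diagonal_apply_eq]
    · rw [charmatrix_apply_ne _ _ _ hij, Matrix.diagonal_apply_ne _ hij,
        Matrix.diagonal_apply_ne _ hij, map_zero, neg_zero]
  rw [Matrix.charpoly, h, det_diagonal]

lemma herm_charpoly {N : Type*} [Fintype N] [DecidableEq N] (A : Matrix N N ℝ)
    (hA : A.IsHermitian) :
    A.charpoly = ∏ i, (X - C (hA.eigenvalues i)) := by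
  conv_lhs => rw [hA.spectral_theorem]
  rw [Unitary.conjStarAlgAut_apply]
  rw [charpoly_conj _ _ _ ((Matrix.mem_unitaryGroup_iff).mp (hA.eigenvectorUnitary).2)]
  have : (RCLike.ofReal ∘ hA.eigenvalues : N → ℝ) = hA.eigenvalues := by
    funext i; simp
  rw [this, charpoly_diagonal]

lemma Bmat_posSemidef (d : ℕ) (p : ℕ → ℝ) (hmono : ∀ r < d, p (r + 1) ≤ p r)
    (hnn : 0 ≤ p d) : (Bmat d p).PosSemidef := by
  refine ⟨Bmat_symm d p, fun v => ?_⟩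
  have h := quad_nonneg d p hmono hnn v
  have e : ∀ i, (v.sum fun j xj => v i * Bmat d p i j * xj) = v i * ∑ y, Bmat d p i y * v y := by
    intro i; rw [Finsupp.sum_fintype _ _ (by simp)]; simp [Finset.mul_sum, mul_assoc]
  simp only [star_trivial]
  rw [Finsupp.sum_fintype _ _ (by simp)]
  simp_rw [e]
  exact h

lemma Ptil_posSemidef (n d : ℕ) (p : ℕ → ℝ) (c : Fin n → Fin d → Bool)
    (hmono : ∀ r < d, p (r + 1) ≤ p r) (hnn : 0 ≤ p d) : (Ptil n d p c).PosSemidef := by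
  have h := (Bmat_posSemidef d p hmono hnn).mul_mul_conjTranspose_same (Zmat n d c)
  have hZ : (Zmat n d c)ᴴ = (Zmat n d c)ᵀ := by
    ext i j; simp [Matrix.conjTranspose_apply]
  rw [hZ] at h
  exact h

lemma Ptil_apply (n d : ℕ) (p : ℕ → ℝ) (c : Fin n → Fin d → Bool) (i j : Fin n) :
    Ptil n d p c i j = Bmat d p (c i) (c j) := by
  simp [Ptil, Matrix.mul_apply, Zmat, ite_mul, mul_ite]

lemma Ptil_trace (n d : ℕ) (p : ℕ → ℝ) (c : Fin n → Fin d → Bool) :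
    (Ptil n d p c).trace = (n : ℝ) * p 0 := by
  rw [Matrix.trace]
  have h : ∀ i : Fin n, (Ptil n d p c).diag i = p 0 := by
    intro i
    rw [Matrix.diag_apply, Ptil_apply]
    simp [Bmat]
  rw [Finset.sum_congr rfl fun i _ => h i]
  simp [mul_comm]

theorem statement13 (d m : ℕ) (hd : 1 ≤ d) (hm : 0 < m)
    (p : ℕ → ℝ) (hp : ∀ r ≤ d, p r ∈ Set.Icc (0:ℝ) 1)
    -- assortative: p₀ > p₁ > … > p_d (≥ 0, by hp)
    (hassort : ∀ r < d, p (r + 1) < p r)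
    (n : ℕ) (hn : n = 2 ^ d * m)
    (c : Fin n → Fin d → Bool) (hbal : Balanced n d m c) :
    -- P̃ is positive semidefinite
    (Ptil n d p c).PosSemidef
    -- the sum of the absolute values of its eigenvalues equals trace(P̃) = n p₀
    ∧ (((Ptil n d p c).charpoly.roots.map fun x => |x|).sum = (Ptil n d p c).trace
        ∧ (Ptil n d p c).trace = (n : ℝ) * p 0)
    -- equivalently, (1/m) Σ_{s=1}^K |λ_s| = 2^d p₀
    ∧ (1 / (m : ℝ)) * (((Ptil n d p c).charpoly.roots.map fun x => |x|).sum)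
        = 2 ^ d * p 0 := by
  have hmono : ∀ r < d, p (r + 1) ≤ p r := fun r hr => (hassort r hr).le
  have hnn : 0 ≤ p d := (hp d le_rfl).1
  have hPSD := Ptil_posSemidef n d p c hmono hnn
  have hH := hPSD.1
  have hcp := herm_charpoly _ hH
  have hroots : (Ptil n d p c).charpoly.roots
      = Multiset.map hH.eigenvalues Finset.univ.val := by
    rw [hcp, Finset.prod_eq_multiset_prod]
    have hmm : Multiset.map (fun i => X - C (hH.eigenvalues i)) Finset.univ.val
        = Multiset.map (fun a => X - C a) (Multiset.map hH.eigenvalues Finset.univ.val) := by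
      rw [Multiset.map_map]
      rfl
    rw [hmm, Polynomial.roots_multiset_prod_X_sub_C]
  have habs : (Ptil n d p c).charpoly.roots.map (fun x => |x|)
      = (Ptil n d p c).charpoly.roots := by
    rw [hroots, Multiset.map_map]
    exact Multiset.map_congr rfl fun i _ => abs_of_nonneg (hPSD.eigenvalues_nonneg i)
  have hsplits : (Ptil n d p c).charpoly.Splits := by
    rw [hcp]
    exact Polynomial.Splits.prod fun i _ => Polynomial.Splits.X_sub_C _
  have hts := Matrix.trace_eq_sum_roots_charpoly_of_splits hsplits
  have htr := Ptil_trace n d p c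
  refine ⟨hPSD, ⟨by rw [habs]; exact hts.symm, htr⟩, ?_⟩
  rw [habs, ← hts, htr, hn]
  have hm' : (m : ℝ) ≠ 0 := Nat.cast_ne_zero.mpr hm.ne'
  push_cast
  field_simp

end BTSBM
end
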